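/- arXiv:1301.2848 — 5 statements merged into one kernel-verified Lean document; each statement's English description precedes it below -/
import Mathlib

section
/- The non-cooperative AP channel selection game with payoffs Ũ_n(a) = (P_n/d_n^θ) / (ω^n_{a_n} + Σ_{i≠n : a_i = a_n} P_i/d_{in}^θ) is an ordinal potential game with potential function Φ(a) = − Σ_i Σ_{j≠i} (P_i P_j / d_{ij}^θ) 1{a_i = a_j} − 2 Σ_i P_i ω^i_{a_i}. Specifically, if player k unilaterally changes its channel from a_k to a'_k, then Φ(a') − Φ(a) = 2 d_k^θ · (ω^k_{a'_k} + Σ_{i≠k: a_i=a'_k} P_i/d_{ik}^θ) · (ω^k_{a_k} + Σ_{i≠k: a_i=a_k} P_i/d_{ik}^θ) · (Ũ_k(a'_k, a_{-k}) − Ũ_k(a_k, a_{-k})). -/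
/-!
Moving player `k` from channel `a k` to `c` changes only the pairs containing `k`, and by
symmetry of the pair weights each such pair is counted twice; so `Φ` changes by `2 P k` times the
drop in `k`'s total received power `S = ω + interference`. Since `Ũ_k = (P k / d k ^ θ) / S`, a
drop in `S` is a rise in `Ũ_k`, and clearing denominators gives the stated factor, which is
positive.
-/

open Finset

/-- Sign-based ordinal potential property. -/
def IsOrdinalPotential {I : Type*} [DecidableEq I] {A : I → Type*}
    (U : I → (∀ i, A i) → ℝ) (Φ : (∀ i, A i) → ℝ) : Prop :=
  ∀ (n : I) (a : ∀ i, A i) (x : A n),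
    Real.sign (Φ (Function.update a n x) - Φ a) =
      Real.sign (U n (Function.update a n x) - U n a)

theorem Real.sign_mul_of_pos {c : ℝ} (hc : 0 < c) (x : ℝ) : Real.sign (c * x) = Real.sign x := by
  rcases lt_trichotomy x 0 with hx | rfl | hx
  · rw [Real.sign_of_neg hx, Real.sign_of_neg (mul_neg_of_pos_of_neg hc hx)]
  · rw [mul_zero]
  · rw [Real.sign_of_pos hx, Real.sign_of_pos (mul_pos hc hx)]

theorem isOrdinalPotential_of_sub_eq_mul {I : Type*} [DecidableEq I] {A : I → Type*}
    {U : I → (∀ i, A i) → ℝ} {Φ : (∀ i, A i) → ℝ} (r : ∀ n, (∀ i, A i) → A n → ℝ)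
    (hr : ∀ n a x, 0 < r n a x)
    (h : ∀ n a x, Φ (Function.update a n x) - Φ a =
      r n a x * (U n (Function.update a n x) - U n a)) :
    IsOrdinalPotential U Φ := fun n a x => by
  rw [h, Real.sign_mul_of_pos (hr n a x)]

section Interference

variable {I C : Type*} [Fintype I] [DecidableEq I]

theorem Finset.sum_sub_apply_update {M : Type*} [AddCommGroup M] (f : I → C → M) (a : I → C) (k : I) (c : C) :
    ∑ i, f i (Function.update a k c i) - ∑ i, f i (a i) = f k c - f k (a k) := by
  rw [← sum_sub_distrib, sum_eq_single k (fun i _ hi => by rw [Function.update_of_ne hi, sub_self])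
    (fun h => absurd (mem_univ k) h), Function.update_self]

theorem Finset.sum_sum_erase_eq_of_eq_zero {M : Type*} [AddCommMonoid M] (f : I → I → M) (k : I)
    (hf : ∀ i j, i ≠ k → j ≠ k → f i j = 0) :
    ∑ i, ∑ j ∈ univ.erase i, f i j = ∑ j ∈ univ.erase k, (f k j + f j k) := by
  rw [← add_sum_erase _ _ (mem_univ k), sum_add_distrib]
  congr 1
  refine sum_congr rfl fun i hi => ?_
  have hik : i ≠ k := ne_of_mem_erase hi
  exact sum_eq_single_of_mem k (mem_erase.mpr ⟨hik.symm, mem_univ k⟩)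
    fun j _ hjk => hf i j hik hjk

variable [DecidableEq C]

/-- The power that player `k` would receive from the other players if it used channel `c`,
`w i k` being the power received at `k` from `i`. -/
def interference (w : I → I → ℝ) (a : I → C) (k : I) (c : C) : ℝ :=
  ∑ i ∈ univ.erase k, if a i = c then w i k else 0

theorem interference_nonneg {w : I → I → ℝ} (hw : ∀ i k, i ≠ k → 0 ≤ w i k) (a : I → C) (k : I)
    (c : C) : 0 ≤ interference w a k c :=
  sum_nonneg fun i hi => by
    split_ifs
    exacts [hw i k (ne_of_mem_erase hi), le_rfl]

theorem interference_update_self (w : I → I → ℝ) (a : I → C) (k : I) (c x : C) :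
    interference w (Function.update a k c) k x = interference w a k x :=
  sum_congr rfl fun i hi => by rw [Function.update_of_ne (ne_of_mem_erase hi)]

theorem interference_eq_mul {w v : I → I → ℝ} {k : I} {r : ℝ} (h : ∀ i, w i k = r * v i k)
    (a : I → C) (x : C) : interference w a k x = r * interference v a k x := by
  simp only [interference, mul_sum, mul_ite, mul_zero, h]

def conflictWeight (G : I → I → ℝ) (a : I → C) : ℝ :=
  ∑ i, ∑ j ∈ univ.erase i, G i j * if a i = a j then 1 else 0

theorem conflictWeight_update_sub {G : I → I → ℝ} (hG : ∀ i j, G i j = G j i) (a : I → C) (k : I)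
    (c : C) :
    conflictWeight G (Function.update a k c) - conflictWeight G a =
      2 * (interference G a k c - interference G a k (a k)) := by
  simp only [conflictWeight, interference, ← sum_sub_distrib, mul_sum, ← mul_sub]
  rw [sum_sum_erase_eq_of_eq_zero _ k fun i j hi hj => by
    rw [Function.update_of_ne hi, Function.update_of_ne hj, sub_self, mul_zero]]
  refine sum_congr rfl fun j hj => ?_
  rw [Function.update_self, Function.update_of_ne (ne_of_mem_erase hj), hG k j]
  simp only [eq_comm (a := c), eq_comm (a := a k)]
  split_ifs <;> ring

theorem potential_update_sub {P : I → ℝ} {G w : I → I → ℝ} (hG : ∀ i j, G i j = G j i)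
    (hGw : ∀ i j, G i j = P j * w i j) (ω : I → C → ℝ) (a : I → C) (k : I) (c : C) :
    (-conflictWeight G (Function.update a k c) - 2 * ∑ i, P i * ω i (Function.update a k c i)) -
        (-conflictWeight G a - 2 * ∑ i, P i * ω i (a i)) =
      2 * P k * ((ω k (a k) + interference w a k (a k)) - (ω k c + interference w a k c)) := by
  have hconflict := conflictWeight_update_sub hG a k c
  rw [interference_eq_mul (fun i => hGw i k), interference_eq_mul (fun i => hGw i k)]
    at hconflict
  linear_combination -hconflict - 2 * sum_sub_apply_update (fun i x => P i * ω i x) a k c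

end Interference

theorem stmt5_general {I : Type*} [Fintype I] [DecidableEq I] {C : Type*} [DecidableEq C]
    (P d : I → ℝ) (D : I → I → ℝ) (ω : I → C → ℝ) (θ : ℝ)
    (hP : ∀ i, 0 < P i) (hd : ∀ i, 0 < d i)
    (hD : ∀ i j, i ≠ j → 0 < D i j) (hDsymm : ∀ i j, D i j = D j i)
    (hω : ∀ n c, 0 < ω n c)
    (Ut : I → (I → C) → ℝ)
    (hUt : ∀ n a, Ut n a = (P n / d n ^ θ) /
      (ω n (a n) + ∑ i ∈ Finset.univ.erase n, if a i = a n then P i / D i n ^ θ else 0))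
    (Φ : (I → C) → ℝ)
    (hΦ : ∀ a, Φ a =
      -(∑ i : I, ∑ j ∈ Finset.univ.erase i, (P i * P j / D i j ^ θ) * (if a i = a j then 1 else 0))
        - 2 * ∑ i : I, P i * ω i (a i)) :
    (∀ (a : I → C) (k : I) (c : C),
      Φ (Function.update a k c) - Φ a =
        2 * d k ^ θ *
          (ω k c + ∑ i ∈ Finset.univ.erase k, if a i = c then P i / D i k ^ θ else 0) *
          (ω k (a k) + ∑ i ∈ Finset.univ.erase k, if a i = a k then P i / D i k ^ θ else 0) *
          (Ut k (Function.update a k c) - Ut k a)) ∧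
    IsOrdinalPotential (fun n a => Ut n a) Φ := by
  set w : I → I → ℝ := fun i k => P i / D i k ^ θ
  have hS : ∀ a k c, 0 < ω k c + interference w a k c := fun a k c =>
    add_pos_of_pos_of_nonneg (hω k c) (interference_nonneg
      (fun i k hik => (div_pos (hP i) (Real.rpow_pos_of_pos (hD i k hik) θ)).le) a k c)
  have hdθ : ∀ k, 0 < d k ^ θ := fun k => Real.rpow_pos_of_pos (hd k) θ
  have hfactor : ∀ a k c,
      0 < 2 * d k ^ θ * (ω k c + interference w a k c) * (ω k (a k) + interference w a k (a k)) :=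
    fun a k c => by
      have := hdθ k; have := hS a k c; have := hS a k (a k); positivity
  have hpotential : ∀ a k c, Φ (Function.update a k c) - Φ a =
      2 * P k * ((ω k (a k) + interference w a k (a k)) - (ω k c + interference w a k c)) :=
    fun a k c => by
      rw [hΦ, hΦ]
      exact potential_update_sub (G := fun i j => P i * P j / D i j ^ θ) (w := w)
        (fun i j => by rw [hDsymm, mul_comm]) (fun i j => by rw [mul_comm, mul_div_assoc]) ω a k c
  have hUt' : ∀ a k, Ut k a = P k / d k ^ θ / (ω k (a k) + interference w a k (a k)) :=
    fun a k => hUt k a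
  have hutility : ∀ a k c,
      Ut k (Function.update a k c) = P k / d k ^ θ / (ω k c + interference w a k c) :=
    fun a k c => by rw [hUt', Function.update_self, interference_update_self]
  have key : ∀ a k c, Φ (Function.update a k c) - Φ a =
      2 * d k ^ θ * (ω k c + interference w a k c) * (ω k (a k) + interference w a k (a k)) *
        (Ut k (Function.update a k c) - Ut k a) := fun a k c => by
    have := hdθ k; have := hS a k c; have := hS a k (a k)
    rw [hpotential, hutility, hUt' a k]
    field_simp
  exact ⟨key, isOrdinalPotential_of_sub_eq_mul _ (fun k a c => hfactor a k c)
    fun k a c => key a k c⟩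

theorem stmt5 {I : Type*} [Fintype I] [DecidableEq I] {C : Type*} [DecidableEq C]
    (P d : I → ℝ) (D : I → I → ℝ) (ω : I → C → ℝ) (θ : ℝ)
    (hP : ∀ i, 0 < P i) (hd : ∀ i, 0 < d i)
    (hD : ∀ i j, i ≠ j → 0 < D i j) (hDsymm : ∀ i j, D i j = D j i)
    (hω : ∀ n c, 0 < ω n c) (hθ : 0 < θ)
    (Ut : I → (I → C) → ℝ)
    (hUt : ∀ n a, Ut n a = (P n / d n ^ θ) /
      (ω n (a n) + ∑ i ∈ Finset.univ.erase n, if a i = a n then P i / D i n ^ θ else 0))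
    (Φ : (I → C) → ℝ)
    (hΦ : ∀ a, Φ a =
      -(∑ i : I, ∑ j ∈ Finset.univ.erase i, (P i * P j / D i j ^ θ) * (if a i = a j then 1 else 0))
        - 2 * ∑ i : I, P i * ω i (a i)) :
    (∀ (a : I → C) (k : I) (c : C),
      Φ (Function.update a k c) - Φ a =
        2 * d k ^ θ *
          (ω k c + ∑ i ∈ Finset.univ.erase k, if a i = c then P i / D i k ^ θ else 0) *
          (ω k (a k) + ∑ i ∈ Finset.univ.erase k, if a i = a k then P i / D i k ^ θ else 0) *
          (Ut k (Function.update a k c) - Ut k a)) ∧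
    IsOrdinalPotential (fun n a => Ut n a) Φ :=
  stmt5_general P d D ω θ hP hd hD hDsymm hω Ut hUt Φ hΦ
end

section
/- Any strategy profile a* that globally maximizes the ordinal potential function Φ of a finite ordinal potential game is a Nash equilibrium of the game. -/
theorem Real.sign_eq_one_iff {r : ℝ} : Real.sign r = 1 ↔ 0 < r := by
  refine ⟨fun h => ?_, Real.sign_of_pos⟩
  rcases lt_trichotomy r 0 with hr | hr | hr
  · rw [Real.sign_of_neg hr] at h; norm_num at h
  · rw [hr, Real.sign_zero] at h; norm_num at h
  · exact hr

theorem IsOrdinalPotential.apply_update_le_of_potential_le {I : Type*} [DecidableEq I]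
    {A : I → Type*} {U : I → (∀ i, A i) → ℝ} {Φ : (∀ i, A i) → ℝ}
    (hpot : IsOrdinalPotential U Φ) {n : I} {a : ∀ i, A i} {x : A n}
    (h : Φ (Function.update a n x) ≤ Φ a) :
    U n (Function.update a n x) ≤ U n a := by
  by_contra! hU
  have hΦ : 0 < Φ (Function.update a n x) - Φ a :=
    Real.sign_eq_one_iff.mp <| (hpot n a x).trans <| Real.sign_eq_one_iff.mpr (sub_pos.mpr hU)
  exact h.not_gt (sub_pos.mp hΦ)

theorem stmt7_general {I : Type*} [DecidableEq I] {A : I → Type*}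
    (U : I → (∀ i, A i) → ℝ) (Φ : (∀ i, A i) → ℝ)
    (hpot : IsOrdinalPotential U Φ)
    (astar : ∀ i, A i) (hmax : ∀ a : ∀ i, A i, Φ a ≤ Φ astar) :
    ∀ (n : I) (x : A n), U n (Function.update astar n x) ≤ U n astar :=
  fun _ _ => hpot.apply_update_le_of_potential_le (hmax _)

theorem stmt7 {I : Type*} [Fintype I] [DecidableEq I] {A : I → Type*} [∀ i, Fintype (A i)]
    (U : I → (∀ i, A i) → ℝ) (Φ : (∀ i, A i) → ℝ)
    (hpot : IsOrdinalPotential U Φ)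
    (astar : ∀ i, A i) (hmax : ∀ a : ∀ i, A i, Φ a ≤ Φ astar) :
    ∀ (n : I) (x : A n), U n (Function.update astar n x) ≤ U n astar :=
  stmt7_general U Φ hpot astar hmax
end

section
/- At any Nash equilibrium a* of the non-cooperative AP channel selection game, the interference experienced by each AP n satisfies ω^n_{a*_n} + Σ_{i≠n : a*_i = a*_n} P_i/d_{in}^θ ≤ ω̄_n + (Σ_{i≠n} P_i/d_{in}^θ)/|M_n|, where ω̄_n = max_{m∈M_n} ω^n_m. Consequently the throughput of AP n at any Nash equilibrium is at least B log₂(1 + (P_n/d_n^θ)/(ω̄_n + (Σ_{i≠n} P_i/d_{in}^θ)/|M_n|)). -/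
/-! At an equilibrium, AP `n` sees on its own channel no more interference than on any other
channel of `M n`, hence no more than the average over `M n`. Each other AP transmits on a single
channel, so summed over all channels its interference at `n` is counted at most once; the average
is therefore at most `ω̄_n + (Σ_{i≠n} P_i/d_{in}^θ)/|M_n|`. The throughput is decreasing in the
interference, which gives the bound on `U n a`. -/

open Finset

namespace ChannelSelection

theorem mul_logb_one_add_div_le_iff {B X z z' : ℝ} (hB : 0 < B) (hX : 0 < X) (hz : 0 < z)
    (hz' : 0 < z') :
    B * Real.logb 2 (1 + X / z) ≤ B * Real.logb 2 (1 + X / z') ↔ z' ≤ z := by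
  rw [mul_le_mul_iff_right₀ hB,
    Real.logb_le_logb one_lt_two (by positivity) (by positivity), add_le_add_iff_left,
    div_le_div_iff_of_pos_left hX hz hz']

theorem le_sup'_add_sum_div_card_of_forall_le {C : Type*} {s : Finset C} (hs : s.Nonempty)
    (w v : C → ℝ) {y : ℝ} (hy : ∀ c ∈ s, y ≤ w c + v c) :
    y ≤ s.sup' hs w + (∑ c ∈ s, v c) / #s := by
  have hcard : (0 : ℝ) < #s := by exact_mod_cast hs.card_pos
  have hsum : #s * y ≤ #s * s.sup' hs w + ∑ c ∈ s, v c :=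
    calc #s * y ≤ ∑ c ∈ s, (w c + v c) := by
          simpa only [nsmul_eq_mul] using card_nsmul_le_sum s _ y hy
      _ ≤ ∑ _c ∈ s, s.sup' hs w + ∑ c ∈ s, v c := by
          rw [sum_add_distrib]
          gcongr with c hc
          exact le_sup' w hc
      _ = #s * s.sup' hs w + ∑ c ∈ s, v c := by rw [sum_const, nsmul_eq_mul]
  rw [← mul_div_cancel_left₀ (s.sup' hs w) hcard.ne', ← add_div, le_div_iff₀ hcard, mul_comm]
  exact hsum

theorem sum_sum_ite_apply_eq_le {C I : Type*} [DecidableEq C] (s : Finset C) (t : Finset I)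
    (g : I → C) {p : I → ℝ} (hp : ∀ i ∈ t, 0 ≤ p i) :
    ∑ c ∈ s, ∑ i ∈ t, (if g i = c then p i else 0) ≤ ∑ i ∈ t, p i := by
  rw [sum_comm]
  gcongr with i hi
  rw [sum_ite_eq]
  split_ifs
  exacts [le_rfl, hp i hi]

theorem sum_erase_ite_update_eq {I C : Type*} [DecidableEq I] [DecidableEq C] (s : Finset I)
    (a : I → C) (n : I) (c : C) (p : I → ℝ) :
    ∑ i ∈ s.erase n, (if Function.update a n c i = c then p i else 0) =
      ∑ i ∈ s.erase n, if a i = c then p i else 0 :=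
  sum_congr rfl fun i hi => by rw [Function.update_of_ne (ne_of_mem_erase hi)]

end ChannelSelection

open ChannelSelection

theorem stmt8_general {I : Type*} [Fintype I] [DecidableEq I] {C : Type*} [DecidableEq C]
    (M : I → Finset C) (hM : ∀ n, (M n).Nonempty)
    (P d : I → ℝ) (D : I → I → ℝ) (ω : I → C → ℝ) (θ B : ℝ)
    (hP : ∀ i, 0 < P i) (hd : ∀ i, 0 < d i)
    (hD : ∀ i j, i ≠ j → 0 < D i j) (hω : ∀ n c, 0 < ω n c)
    (hB : 0 < B)
    (U : I → (I → C) → ℝ)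
    (hU : ∀ n a, U n a = B * Real.logb 2 (1 + (P n / d n ^ θ) /
      (ω n (a n) + ∑ i ∈ Finset.univ.erase n, if a i = a n then P i / D i n ^ θ else 0)))
    (a : I → C)
    (hNE : ∀ n, ∀ c ∈ M n, U n (Function.update a n c) ≤ U n a) :
    ∀ n : I,
      (ω n (a n) + ∑ i ∈ Finset.univ.erase n, if a i = a n then P i / D i n ^ θ else 0)
        ≤ (M n).sup' (hM n) (ω n) + (∑ i ∈ Finset.univ.erase n, P i / D i n ^ θ) / (M n).card ∧
      B * Real.logb 2 (1 + (P n / d n ^ θ) /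
          ((M n).sup' (hM n) (ω n) + (∑ i ∈ Finset.univ.erase n, P i / D i n ^ θ) / (M n).card))
        ≤ U n a := by
  intro n
  set f : C → ℝ := fun c =>
    ω n c + ∑ i ∈ univ.erase n, if a i = c then P i / D i n ^ θ else 0
  have hw : ∀ i ∈ univ.erase n, 0 ≤ P i / D i n ^ θ := fun i hi =>
    div_nonneg (hP i).le (Real.rpow_nonneg (hD i n (ne_of_mem_erase hi)).le θ)
  have hf : ∀ c, 0 < f c := fun c =>
    add_pos_of_pos_of_nonneg (hω n c) (sum_nonneg fun i hi => by split_ifs; exacts [hw i hi, le_rfl])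
  have hX : 0 < P n / d n ^ θ := div_pos (hP n) (Real.rpow_pos_of_pos (hd n) θ)
  have hUf : ∀ c, U n (Function.update a n c) = B * Real.logb 2 (1 + P n / d n ^ θ / f c) :=
    fun c => by rw [hU, Function.update_self, sum_erase_ite_update_eq]
  have hUa : U n a = B * Real.logb 2 (1 + P n / d n ^ θ / f (a n)) := by
    rw [← hUf, Function.update_eq_self]
  have hmin : ∀ c ∈ M n, f (a n) ≤ f c := fun c hc =>
    (mul_logb_one_add_div_le_iff hB hX (hf _) (hf _)).1 (hUf c ▸ hUa ▸ hNE n c hc)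
  have hbound : f (a n) ≤ (M n).sup' (hM n) (ω n) +
      (∑ i ∈ univ.erase n, P i / D i n ^ θ) / #(M n) :=
    (le_sup'_add_sum_div_card_of_forall_le (hM n) (ω n) _ hmin).trans <| by
      gcongr
      exact sum_sum_ite_apply_eq_le (M n) _ a hw
  refine ⟨hbound, ?_⟩
  rw [hUa]
  exact (mul_logb_one_add_div_le_iff hB hX ((hf _).trans_le hbound) (hf _)).2 hbound

theorem stmt8 {I : Type*} [Fintype I] [DecidableEq I] {C : Type*} [DecidableEq C]
    (M : I → Finset C) (hM : ∀ n, (M n).Nonempty)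
    (P d : I → ℝ) (D : I → I → ℝ) (ω : I → C → ℝ) (θ B : ℝ)
    (hP : ∀ i, 0 < P i) (hd : ∀ i, 0 < d i)
    (hD : ∀ i j, i ≠ j → 0 < D i j) (hω : ∀ n c, 0 < ω n c)
    (hθ : 0 < θ) (hB : 0 < B)
    (U : I → (I → C) → ℝ)
    (hU : ∀ n a, U n a = B * Real.logb 2 (1 + (P n / d n ^ θ) /
      (ω n (a n) + ∑ i ∈ Finset.univ.erase n, if a i = a n then P i / D i n ^ θ else 0)))
    (a : I → C) (ha : ∀ n, a n ∈ M n)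
    (hNE : ∀ n, ∀ c ∈ M n, U n (Function.update a n c) ≤ U n a) :
    ∀ n : I,
      (ω n (a n) + ∑ i ∈ Finset.univ.erase n, if a i = a n then P i / D i n ^ θ else 0)
        ≤ (M n).sup' (hM n) (ω n) + (∑ i ∈ Finset.univ.erase n, P i / D i n ^ θ) / (M n).card ∧
      B * Real.logb 2 (1 + (P n / d n ^ θ) /
          ((M n).sup' (hM n) (ω n) + (∑ i ∈ Finset.univ.erase n, P i / D i n ^ θ) / (M n).card))
        ≤ U n a :=
  stmt8_general M hM P d D ω θ B hP hd hD hω hB U hU a hNE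
end

section
/- In the state-based distributed AP association game, if player k in state s = (s_k, s_{-k}) performs a better response update to b_k with V_k(b_k, s_{-k}, s) > V_k(s, s), then the state-based potential Ψ(b_k, s_{-k}, s) > Ψ(s, s), where Ψ(b, s) = Σ_k ln U_{b_k} + Σ_n Σ_{i=0}^{x_n(b)} ln g(i) + Σ_k ln H^k_{b_k}. -/
/-!
Ψ is an exact potential for the logarithm of the gross payoff `H U g(x)`: when user `k` moves
from `s k` to `bk`, the terms `ln U`, `ln H` change only in `k`'s summand, and the Rosenthal-type
term `∑ₙ ∑_{i ≤ xₙ} ln g(i)` gains `ln g` of the new load at `bk` and loses `ln g` of the old load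
at `s k`. So `Ψ` increases by `ln` of the new gross payoff minus `ln` of the old one. A better
response raises the gross payoff, because the mobility cost `δ d` is nonnegative after the move
and zero before it, and `ln` is strictly monotone.
-/

open Finset

/-- The load of AP `n` under association profile `b` : number of users associated with `n`. -/
def load {K I : Type*} [Fintype K] [DecidableEq I] (b : K → I) (n : I) : ℕ :=
  (Finset.univ.filter (fun k => b k = n)).card

section UnilateralDeviation

variable {K I : Type*} [Fintype K]

theorem load_eq_sum [DecidableEq I] (b : K → I) (n : I) :
    load b n = ∑ j, if b j = n then 1 else 0 :=
  card_filter _ _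

variable [DecidableEq K]

theorem sum_apply_update_add {M : Type*} [AddCommMonoid M] (f : K → I → M) (s : K → I)
    (k : K) (v : I) :
    ∑ j, f j (Function.update s k v j) + f k (s k) = ∑ j, f j (s j) + f k v := by
  simp_rw [Function.apply_update f s k v]
  rw [sum_update_of_mem (mem_univ k), sum_eq_add_sum_sdiff_singleton_of_mem (mem_univ k)]
  abel

variable [DecidableEq I]

theorem load_update_add (s : K → I) (k : K) (v n : I) :
    load (Function.update s k v) n + (if s k = n then 1 else 0)
      = load s n + (if v = n then 1 else 0) := by
  simp only [load_eq_sum]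
  exact sum_apply_update_add (fun _ a => if a = n then 1 else 0) s k v

variable {s : K → I} {k : K} {v : I}

theorem load_update_self_of_ne (hv : v ≠ s k) :
    load (Function.update s k v) v = load s v + 1 := by
  simpa [hv.symm] using load_update_add s k v v

theorem load_update_add_one_of_ne (hv : v ≠ s k) :
    load (Function.update s k v) (s k) + 1 = load s (s k) := by
  simpa [hv] using load_update_add s k v (s k)

theorem load_update_of_ne_of_ne {n : I} (hnv : n ≠ v) (hns : n ≠ s k) :
    load (Function.update s k v) n = load s n := by
  simpa [hnv.symm, hns.symm] using load_update_add s k v n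

theorem sum_load_potential_update [Fintype I] {M : Type*} [AddCommGroup M] (F : ℕ → M)
    (hv : v ≠ s k) :
    ∑ n, ∑ i ∈ range (load (Function.update s k v) n + 1), F i + F (load s (s k))
      = ∑ n, ∑ i ∈ range (load s n + 1), F i + F (load (Function.update s k v) v) := by
  have hsummand : ∀ n : I,
      ∑ i ∈ range (load (Function.update s k v) n + 1), F i
          + (if s k = n then F (load s (s k)) else 0)
        = ∑ i ∈ range (load s n + 1), F i
          + (if v = n then F (load (Function.update s k v) v) else 0) := by
    intro n
    by_cases hnv : n = v
    · subst hnv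
      rw [if_neg hv.symm, if_pos rfl, load_update_self_of_ne hv, sum_range_succ _ (load s n + 1)]
      abel
    by_cases hns : n = s k
    · subst hns
      rw [if_pos rfl, if_neg hv, ← load_update_add_one_of_ne hv,
        sum_range_succ _ (load (Function.update s k v) (s k) + 1)]
      abel
    · rw [if_neg (Ne.symm hns), if_neg (Ne.symm hnv), load_update_of_ne_of_ne hnv hns]
  simpa only [sum_add_distrib, sum_ite_eq, mem_univ, if_true] using Fintype.sum_congr _ _ hsummand

end UnilateralDeviation

theorem stmt12_general {K I : Type*} [Fintype K] [DecidableEq K] [Fintype I] [DecidableEq I]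
    (UAP : I → ℝ) (H : K → I → ℝ) (δ : K → ℝ) (dst : I → I → ℝ) (g : ℕ → ℝ)
    (hUAP : ∀ n, 0 < UAP n) (hH : ∀ k n, 1 ≤ H k n) (hδ : ∀ k, 0 < δ k)
    (hdst0 : ∀ n, dst n n = 0) (hdstpos : ∀ n m, n ≠ m → 0 < dst n m)
    (hg : ∀ i, 0 < g i)
    (V : K → (K → I) → (K → I) → ℝ)
    (hV : ∀ k b s, V k b s =
      H k (b k) * UAP (b k) * g (load b (b k)) - δ k * dst (b k) (s k))
    (Ψ : (K → I) → (K → I) → ℝ)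
    (hΨ : ∀ b s, Ψ b s = ∑ k : K, Real.log (UAP (b k))
      + ∑ n : I, ∑ i ∈ Finset.range (load b n + 1), Real.log (g i)
      + ∑ k : K, Real.log (H k (b k)))
    (s : K → I) (k : K) (bk : I)
    (himp : V k (Function.update s k bk) s > V k s s) :
    Ψ (Function.update s k bk) s > Ψ s s := by
  set b := Function.update s k bk
  have hne : bk ≠ s k := by
    rintro rfl
    simp [b] at himp
  have hgross : H k (s k) * UAP (s k) * g (load s (s k)) < H k bk * UAP bk * g (load b bk) := by
    have hcost : 0 < δ k * dst bk (s k) := mul_pos (hδ k) (hdstpos _ _ hne)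
    rw [hV, hV, show b k = bk from Function.update_self k bk s, hdst0] at himp
    linarith
  have hHpos : ∀ n, 0 < H k n := fun n => one_pos.trans_le (hH k n)
  have hlog_gross : ∀ n x, Real.log (H k n * UAP n * g x)
      = Real.log (H k n) + Real.log (UAP n) + Real.log (g x) := fun n x => by
    rw [Real.log_mul (mul_pos (hHpos n) (hUAP n)).ne' (hg x).ne',
      Real.log_mul (hHpos n).ne' (hUAP n).ne']
  have hlog := Real.log_lt_log (mul_pos (mul_pos (hHpos _) (hUAP _)) (hg _)) hgross
  rw [hlog_gross, hlog_gross] at hlog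
  have hU := sum_apply_update_add (fun _ n => Real.log (UAP n)) s k bk
  have hHsum := sum_apply_update_add (fun j n => Real.log (H j n)) s k bk
  have hcongestion := sum_load_potential_update (fun i => Real.log (g i)) hne
  rw [hΨ, hΨ]
  linarith

theorem stmt12 {K I : Type*} [Fintype K] [DecidableEq K] [Fintype I] [DecidableEq I]
    (UAP : I → ℝ) (H : K → I → ℝ) (δ : K → ℝ) (dst : I → I → ℝ) (g : ℕ → ℝ)
    (hUAP : ∀ n, 0 < UAP n) (hH : ∀ k n, 1 ≤ H k n) (hδ : ∀ k, 0 < δ k)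
    (hdst0 : ∀ n, dst n n = 0) (hdstpos : ∀ n m, n ≠ m → 0 < dst n m)
    (hg : ∀ i, 0 < g i) (hg1 : ∀ i, g i ≤ 1) (hganti : Antitone g)
    (V : K → (K → I) → (K → I) → ℝ)
    (hV : ∀ k b s, V k b s =
      H k (b k) * UAP (b k) * g (load b (b k)) - δ k * dst (b k) (s k))
    (Ψ : (K → I) → (K → I) → ℝ)
    (hΨ : ∀ b s, Ψ b s = ∑ k : K, Real.log (UAP (b k))
      + ∑ n : I, ∑ i ∈ Finset.range (load b n + 1), Real.log (g i)
      + ∑ k : K, Real.log (H k (b k)))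
    (s : K → I) (k : K) (bk : I)
    (himp : V k (Function.update s k bk) s > V k s s) :
    Ψ (Function.update s k bk) s > Ψ s s :=
  stmt12_general UAP H δ dst g hUAP hH hδ hdst0 hdstpos hg V hV Ψ hΨ s k bk himp
end

section
/- In the state-based distributed AP association game, every improvement path is finite: there is no infinite sequence ((b^0,s^0),(b^1,s^1),…) in which at each step t exactly one player k_t deviates and strictly improves, V_{k_t}(b^t, s^t) > V_{k_t}(s^t, s^t), with state transitions s^{t+1} = b^t. -/
open Finset

lemma load_split {K I : Type*} [Fintype K] [DecidableEq K] [DecidableEq I]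
    (b : K → I) (k : K) (m : I) :
    load b m = ((Finset.univ.erase k).filter (fun j => b j = m)).card
      + (if b k = m then 1 else 0) := by
  classical
  unfold load
  conv_lhs => rw [← Finset.insert_erase (Finset.mem_univ k)]
  rw [Finset.filter_insert]
  split
  · rw [Finset.card_insert_of_notMem (by simp)]
  · simp

theorem stmt14 {K I : Type*} [Fintype K] [DecidableEq K] [Fintype I] [DecidableEq I]
    (UAP : I → ℝ) (H : K → I → ℝ) (δ : K → ℝ) (dst : I → I → ℝ) (g : ℕ → ℝ)
    (hUAP : ∀ n, 0 < UAP n) (hH : ∀ k n, 1 ≤ H k n) (hδ : ∀ k, 0 < δ k)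
    (hdst0 : ∀ n, dst n n = 0) (hdstpos : ∀ n m, n ≠ m → 0 < dst n m)
    (hg : ∀ i, 0 < g i)
    (V : K → (K → I) → (K → I) → ℝ)
    (hV : ∀ k b s, V k b s =
      H k (b k) * UAP (b k) * g (load b (b k)) - δ k * dst (b k) (s k)) :
    ¬ ∃ (b s : ℕ → K → I), (∀ t, s (t + 1) = b t) ∧
      ∀ t, ∃ (k : K) (bk : I), b t = Function.update (s t) k bk ∧ bk ≠ s t k ∧
        V k (b t) (s t) > V k (s t) (s t) := by
  classical
  rintro ⟨b, s, hs, hstep⟩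
  set T : ℕ → ℝ := fun x => ∑ i ∈ Finset.range x, Real.log (g (i+1)) with hT
  have Tsucc : ∀ x, T (x+1) = T x + Real.log (g (x+1)) := by
    intro x; simp only [hT]; exact Finset.sum_range_succ _ x
  set Φ : (K → I) → ℝ :=
    fun c => (∑ j, Real.log (H j (c j) * UAP (c j))) + ∑ n, T (load c n) with hΦ
  have key : ∀ t, Φ (s t) < Φ (b t) := by
    intro t
    obtain ⟨k, n₁, hb, hne, himp⟩ := hstep t
    set σ := s t with hσ
    set β := b t with hβ
    set n₀ := σ k with hn₀
    have hβk : β k = n₁ := by rw [hb]; simp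
    have hn01 : n₁ ≠ n₀ := hne
    -- loads off k agree
    have Eq1 : ∀ m : I, ((Finset.univ.erase k).filter (fun j => β j = m))
        = ((Finset.univ.erase k).filter (fun j => σ j = m)) := by
      intro m
      apply Finset.filter_congr
      intro j hj
      have hjk : j ≠ k := Finset.ne_of_mem_erase hj
      rw [hb, Function.update_of_ne hjk]
    have l1 : load β n₁ = load σ n₁ + 1 := by
      have h2 : σ k ≠ n₁ := fun h => hne (h.symm.trans hn₀.symm)
      rw [load_split β k, load_split σ k, Eq1]
      simp [hβk, h2]
    have l0 : load σ n₀ = load β n₀ + 1 := by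
      have h1 : β k ≠ n₀ := by rw [hβk]; exact hne
      have h2 : σ k = n₀ := hn₀.symm
      rw [load_split β k, load_split σ k, Eq1]
      simp [h1, h2]
    have lother : ∀ m, m ≠ n₀ → m ≠ n₁ → load β m = load σ m := by
      intro m hm0 hm1
      have h1 : β k ≠ m := by rw [hβk]; exact fun h => hm1 h.symm
      have h2 : σ k ≠ m := fun h => hm0 (h.symm.trans hn₀.symm)
      rw [load_split β k, load_split σ k, Eq1]
      simp [h1, h2]
    -- difference of first sums
    have sum1 : (∑ j, Real.log (H j (β j) * UAP (β j)))
        - (∑ j, Real.log (H j (σ j) * UAP (σ j)))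
        = Real.log (H k n₁ * UAP n₁) - Real.log (H k n₀ * UAP n₀) := by
      have split : ∀ c : K → I, (∑ j, Real.log (H j (c j) * UAP (c j)))
          = Real.log (H k (c k) * UAP (c k))
            + ∑ j ∈ Finset.univ.erase k, Real.log (H j (c j) * UAP (c j)) := by
        intro c
        exact (Finset.add_sum_erase Finset.univ
          (fun j => Real.log (H j (c j) * UAP (c j))) (Finset.mem_univ k)).symm
      rw [split β, split σ, hβk, ← hn₀]
      have heq : (∑ j ∈ Finset.univ.erase k, Real.log (H j (β j) * UAP (β j)))
          = ∑ j ∈ Finset.univ.erase k, Real.log (H j (σ j) * UAP (σ j)) := by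
        apply Finset.sum_congr rfl
        intro j hj
        rw [hb, Function.update_of_ne (Finset.ne_of_mem_erase hj)]
      rw [heq]; ring
    -- difference of second sums
    have sum2 : (∑ n, T (load β n)) - (∑ n, T (load σ n))
        = Real.log (g (load β n₁)) - Real.log (g (load σ n₀)) := by
      have hdist : (∑ n, T (load β n)) - (∑ n, T (load σ n))
          = ∑ n, (T (load β n) - T (load σ n)) := by
        rw [Finset.sum_sub_distrib]
      rw [hdist]
      have hsubset : ({n₀, n₁} : Finset I) ⊆ Finset.univ := Finset.subset_univ _
      rw [← Finset.sum_subset hsubset]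
      · rw [Finset.sum_pair (fun h => hn01 h.symm)]
        have d1 : T (load β n₁) - T (load σ n₁) = Real.log (g (load β n₁)) := by
          rw [l1, Tsucc, ← l1]; ring
        have d0 : T (load β n₀) - T (load σ n₀) = - Real.log (g (load σ n₀)) := by
          rw [l0, Tsucc, ← l0]; ring
        rw [d0, d1]; ring
      · intro n _ hn
        simp only [Finset.mem_insert, Finset.mem_singleton, not_or] at hn
        rw [lother n hn.1 hn.2]
        ring
    -- positivity facts
    have hA : 0 < H k n₁ * UAP n₁ :=
      mul_pos (lt_of_lt_of_le one_pos (hH k n₁)) (hUAP n₁)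
    have hB : 0 < H k n₀ * UAP n₀ :=
      mul_pos (lt_of_lt_of_le one_pos (hH k n₀)) (hUAP n₀)
    -- the improvement inequality
    have himp' : H k n₀ * UAP n₀ * g (load σ n₀)
        < H k n₁ * UAP n₁ * g (load β n₁) := by
      have h1 := himp
      rw [hV, hV, hβk, ← hn₀, hdst0] at h1
      have hd : 0 < δ k * dst n₁ n₀ := mul_pos (hδ k) (hdstpos _ _ hn01)
      nlinarith
    have hlog := Real.log_lt_log (mul_pos hB (hg _)) himp'
    rw [Real.log_mul hB.ne' (hg _).ne', Real.log_mul hA.ne' (hg _).ne'] at hlog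
    have hdiff : Φ β - Φ σ
        = (Real.log (H k n₁ * UAP n₁) - Real.log (H k n₀ * UAP n₀))
        + (Real.log (g (load β n₁)) - Real.log (g (load σ n₀))) := by
      rw [hΦ]; dsimp only
      rw [← sum1, ← sum2]; ring
    linarith
  have mono : StrictMono (fun t => Φ (s t)) := by
    apply strictMono_nat_of_lt_succ
    intro t
    rw [hs t]
    exact key t
  have hfin : (Set.range fun t => s t).Finite := Set.toFinite _
  have hfin2 : (Set.range fun t => Φ (s t)).Finite := by
    apply (hfin.image Φ).subset
    rintro _ ⟨t, rfl⟩
    exact ⟨s t, ⟨t, rfl⟩, rfl⟩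
  exact Set.infinite_range_of_injective mono.injective hfin2
end
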